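/- Span bound for the martingale increments: under the generalized concentrability condition Γ_F = sup_x ∑_{i=1}^∞ IPM_F(P^i(x,·),π) < ∞ and f_l ∈ M_l·F bounded with span sp(f_l), the function g_i(x_0^{i−1}, x) := ∑_{l=0}^{i−1} f_l(x_l) + f_i(x) + ∑_{l=i+1}^{n−1} E_x[f_l(X_l)] satisfies, for all x_0^i, inf_{x} g_i(x_0^{i−1},x) ≤ g_i(x_0^i) ≤ inf_x g_i(x_0^{i−1},x) + A_i with A_i := 2 M_{i+1}^max Γ_F + sp(f_i), where M_{i+1}^max = max{M_{i+1},...,M_{n−1}} (and 0 if i+1 ≥ n). -/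

import Mathlib

open MeasureTheory ProbabilityTheory ENNReal

noncomputable def IPM {X : Type*} [MeasurableSpace X] (F : Set (X → ℝ))
    (μ ν : Measure X) : ℝ≥0∞ :=
  ⨆ f : F, ENNReal.ofReal |∫ x, (f : X → ℝ) x ∂μ - ∫ x, (f : X → ℝ) x ∂ν|

noncomputable def finMax (M : ℕ → ℝ) (i n : ℕ) : ℝ :=
  WithBot.unbotD 0 ((Finset.Ico i n).sup fun l => ((M l : ℝ) : WithBot ℝ))

/-!
Only the last summand of `g_i(x_0^{i-1}, ·)` and its tail of expectations depend on the free
point `x`. The last summand varies by at most `sp(f_i)`. For the tail, compare the laws of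
`X_l` started at `x` and at `y` through `π`: since `f_l / M_l ∈ F`, the `l`-th terms differ by
at most `M_l (IPM_F(P^{l-i}(x,·), π) + IPM_F(P^{l-i}(y,·), π))`, and summing over `l` gives at most
`2 M_{i+1}^max Γ_F`. A function whose oscillation is at most `A_i` lies within `A_i` of its infimum.
-/

lemma finMax_eq_sup' (M : ℕ → ℝ) {i n : ℕ} (h : (Finset.Ico i n).Nonempty) :
    finMax M i n = (Finset.Ico i n).sup' h M := by
  rw [finMax]
  exact (congrArg (WithBot.unbotD 0) (Finset.coe_sup' h M)).symm

lemma le_finMax (M : ℕ → ℝ) {i n l : ℕ} (hl : l ∈ Finset.Ico i n) : M l ≤ finMax M i n := by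
  rw [finMax_eq_sup' M ⟨l, hl⟩]
  exact Finset.le_sup' M hl

lemma finMax_nonneg {M : ℕ → ℝ} (hM : ∀ l, 0 ≤ M l) (i n : ℕ) : 0 ≤ finMax M i n := by
  rcases (Finset.Ico i n).eq_empty_or_nonempty with h | ⟨l, hl⟩
  · simp [finMax, h]
  · exact (hM l).trans (le_finMax M hl)

lemma sum_Ico_tsub_le_tsum_succ (u : ℕ → ℝ≥0∞) (i n : ℕ) :
    ∑ l ∈ Finset.Ico (i + 1) n, u (l - i) ≤ ∑' k, u (k + 1) := by
  rw [Finset.sum_Ico_eq_sum_range]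
  calc ∑ k ∈ Finset.range (n - (i + 1)), u (i + 1 + k - i)
      = ∑ k ∈ Finset.range (n - (i + 1)), u (k + 1) :=
        Finset.sum_congr rfl fun k _ => by rw [show i + 1 + k - i = k + 1 by omega]
    _ ≤ ∑' k, u (k + 1) := ENNReal.sum_le_tsum _

section IPM

variable {X : Type*} [MeasurableSpace X] {F : Set (X → ℝ)}

lemma ofReal_abs_integral_sub_le_IPM {φ : X → ℝ} (hφ : φ ∈ F) (μ ν : Measure X) :
    ENNReal.ofReal |∫ x, φ x ∂μ - ∫ x, φ x ∂ν| ≤ IPM F μ ν :=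
  le_iSup (fun ψ : F => ENNReal.ofReal |∫ x, (ψ : X → ℝ) x ∂μ - ∫ x, (ψ : X → ℝ) x ∂ν|) ⟨φ, hφ⟩

lemma ofReal_abs_integral_sub_le_IPM_add {φ : X → ℝ} (hφ : φ ∈ F) (μ ν π : Measure X) :
    ENNReal.ofReal |∫ x, φ x ∂μ - ∫ x, φ x ∂ν| ≤ IPM F μ π + IPM F ν π :=
  calc ENNReal.ofReal |∫ x, φ x ∂μ - ∫ x, φ x ∂ν|
      ≤ ENNReal.ofReal (|∫ x, φ x ∂μ - ∫ x, φ x ∂π| + |∫ x, φ x ∂ν - ∫ x, φ x ∂π|) :=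
        ENNReal.ofReal_le_ofReal <| (abs_sub_le _ (∫ x, φ x ∂π) _).trans_eq <| by
          rw [abs_sub_comm (∫ x, φ x ∂π)]
    _ ≤ IPM F μ π + IPM F ν π :=
        ofReal_add_le.trans (add_le_add (ofReal_abs_integral_sub_le_IPM hφ μ π)
          (ofReal_abs_integral_sub_le_IPM hφ ν π))

lemma ofReal_abs_integral_sub_le_mul_IPM_add {h : X → ℝ} {c : ℝ} (hc : 0 < c)
    (hF : (fun x => h x / c) ∈ F) (μ ν π : Measure X) :
    ENNReal.ofReal |∫ x, h x ∂μ - ∫ x, h x ∂ν| ≤ ENNReal.ofReal c * (IPM F μ π + IPM F ν π) := by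
  have hscale : |∫ x, h x ∂μ - ∫ x, h x ∂ν| = c * |∫ x, h x / c ∂μ - ∫ x, h x / c ∂ν| := by
    rw [integral_div, integral_div, ← sub_div, abs_div, abs_of_pos hc, mul_div_cancel₀ _ hc.ne']
  rw [hscale, ENNReal.ofReal_mul hc.le]
  exact mul_le_mul_right (ofReal_abs_integral_sub_le_IPM_add hF μ ν π) _

lemma sum_integral_sub_sum_integral_le_of_sum_IPM_le {ι : Type*} (s : Finset ι)
    (h : ι → X → ℝ) (c : ι → ℝ) (hc : ∀ l ∈ s, 0 < c l) (hF : ∀ l ∈ s, (fun x => h l x / c l) ∈ F)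
    {K : ℝ} (hK : 0 ≤ K) (hcK : ∀ l ∈ s, c l ≤ K) (μ ν : ι → Measure X) (π : Measure X)
    {Γ : ℝ≥0∞} (hΓ : Γ ≠ ⊤) (hμ : ∑ l ∈ s, IPM F (μ l) π ≤ Γ) (hν : ∑ l ∈ s, IPM F (ν l) π ≤ Γ) :
    ∑ l ∈ s, ∫ x, h l x ∂(μ l) - ∑ l ∈ s, ∫ x, h l x ∂(ν l) ≤ 2 * K * Γ.toReal := by
  set d : ι → ℝ := fun l => ∫ x, h l x ∂(μ l) - ∫ x, h l x ∂(ν l)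
  have hd : ENNReal.ofReal (∑ l ∈ s, d l) ≤ ENNReal.ofReal K * (Γ + Γ) :=
    calc ENNReal.ofReal (∑ l ∈ s, d l)
        ≤ ENNReal.ofReal (∑ l ∈ s, |d l|) :=
          ENNReal.ofReal_le_ofReal (Finset.sum_le_sum fun l _ => le_abs_self _)
      _ = ∑ l ∈ s, ENNReal.ofReal |d l| := ofReal_sum_of_nonneg fun l _ => abs_nonneg _
      _ ≤ ∑ l ∈ s, ENNReal.ofReal K * (IPM F (μ l) π + IPM F (ν l) π) :=
          Finset.sum_le_sum fun l hl =>
            (ofReal_abs_integral_sub_le_mul_IPM_add (hc l hl) (hF l hl) _ _ π).trans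
              (mul_le_mul_left (ENNReal.ofReal_le_ofReal (hcK l hl)) _)
      _ = ENNReal.ofReal K * (∑ l ∈ s, IPM F (μ l) π + ∑ l ∈ s, IPM F (ν l) π) := by
          rw [← Finset.sum_add_distrib, Finset.mul_sum]
      _ ≤ ENNReal.ofReal K * (Γ + Γ) := by gcongr
  rw [← Finset.sum_sub_distrib]
  rw [ENNReal.ofReal_le_iff_le_toReal (by finiteness), ENNReal.toReal_mul,
    ENNReal.toReal_ofReal hK, ENNReal.toReal_add hΓ hΓ] at hd
  linarith

end IPM

lemma ciInf_le_and_le_ciInf_add {ι : Type*} {u : ι → ℝ} {A : ℝ}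
    (hu : ∀ x y, u x ≤ u y + A) (x : ι) : (⨅ y, u y) ≤ u x ∧ u x ≤ (⨅ y, u y) + A := by
  have hbdd : BddBelow (Set.range u) := ⟨u x - A, Set.forall_mem_range.2 fun y => by
    linarith [hu x y]⟩
  refine ⟨ciInf_le hbdd x, ?_⟩
  have : Nonempty ι := ⟨x⟩
  have : u x - A ≤ ⨅ y, u y := le_ciInf fun y => by linarith [hu x y]
  linarith

theorem span_bound_martingale_increments_general
    {S : Type*} [MeasurableSpace S]
    (P : Kernel S S)
    (F : Set (S → ℝ)) (π : Measure S)
    (Γ : ℝ≥0∞)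
    (hΓdef : Γ = ⨆ x : S, ∑' i : ℕ,
      IPM F ((fun ν => ν.bind (fun y => P y))^[i+1] (Measure.dirac x)) π)
    (hΓ : Γ ≠ ⊤)
    (n : ℕ) (f : ℕ → S → ℝ)
    (a b : ℕ → ℝ) (hfab : ∀ l x, f l x ∈ Set.Icc (a l) (b l))
    (M : ℕ → ℝ) (hM : ∀ l, 0 < M l) (hMF : ∀ l < n, (fun x => f l x / M l) ∈ F)
    (i : ℕ)
    (g : (Fin i → S) → S → ℝ)
    (hgdef : ∀ xs x, g xs x = (∑ l : Fin i, f l (xs l)) + f i x +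
      ∑ l ∈ Finset.Ico (i+1) n,
        ∫ y, f l y ∂((fun ν => ν.bind (fun z => P z))^[l - i] (Measure.dirac x))) :
    ∀ (xs : Fin i → S) (x : S),
      (⨅ y, g xs y) ≤ g xs x ∧
      g xs x ≤ (⨅ y, g xs y) + (2 * finMax M (i+1) n * Γ.toReal + (b i - a i)) := by
  set T : Measure S → Measure S := fun ν => ν.bind (fun z => P z)
  have hIPM : ∀ x, ∑ l ∈ Finset.Ico (i + 1) n, IPM F (T^[l - i] (Measure.dirac x)) π ≤ Γ := by
    intro x
    rw [hΓdef]
    exact (sum_Ico_tsub_le_tsum_succ (fun k => IPM F (T^[k] (Measure.dirac x)) π) i n).trans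
      (le_iSup (fun x => ∑' k, IPM F (T^[k + 1] (Measure.dirac x)) π) x)
  intro xs
  refine ciInf_le_and_le_ciInf_add fun x y => ?_
  have hspan : f i x - f i y ≤ b i - a i := by linarith [(hfab i x).2, (hfab i y).1]
  have htail := sum_integral_sub_sum_integral_le_of_sum_IPM_le (Finset.Ico (i + 1) n) f M
    (fun l _ => hM l) (fun l hl => hMF l (Finset.mem_Ico.1 hl).2) (finMax_nonneg (fun l => (hM l).le) _ _)
    (fun l hl => le_finMax M hl) (fun l => T^[l - i] (Measure.dirac x))
    (fun l => T^[l - i] (Measure.dirac y)) π hΓ (hIPM x) (hIPM y)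
  rw [hgdef, hgdef]
  linarith

theorem span_bound_martingale_increments
    {S : Type*} [MeasurableSpace S] [Nonempty S]
    (P : Kernel S S) [IsMarkovKernel P]
    (F : Set (S → ℝ)) (π : Measure S) [IsProbabilityMeasure π]
    (hinv : π.bind (fun x => P x) = π)
    (Γ : ℝ≥0∞)
    (hΓdef : Γ = ⨆ x : S, ∑' i : ℕ,
      IPM F ((fun ν => ν.bind (fun y => P y))^[i+1] (Measure.dirac x)) π)
    (hΓ : Γ ≠ ⊤)
    (n : ℕ) (f : ℕ → S → ℝ) (hfmeas : ∀ l, Measurable (f l))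
    (a b : ℕ → ℝ) (hfab : ∀ l x, f l x ∈ Set.Icc (a l) (b l))
    (M : ℕ → ℝ) (hM : ∀ l, 0 < M l) (hMF : ∀ l < n, (fun x => f l x / M l) ∈ F)
    (i : ℕ) (hi : i < n)
    (g : (Fin i → S) → S → ℝ)
    (hgdef : ∀ xs x, g xs x = (∑ l : Fin i, f l (xs l)) + f i x +
      ∑ l ∈ Finset.Ico (i+1) n,
        ∫ y, f l y ∂((fun ν => ν.bind (fun z => P z))^[l - i] (Measure.dirac x))) :
    ∀ (xs : Fin i → S) (x : S),
      (⨅ y, g xs y) ≤ g xs x ∧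
      g xs x ≤ (⨅ y, g xs y) + (2 * finMax M (i+1) n * Γ.toReal + (b i - a i)) :=
  span_bound_martingale_increments_general P F π Γ hΓdef hΓ n f a b hfab M hM hMF i g hgdef
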